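/- arXiv:2506.07668 — 5 statements merged into one kernel-verified Lean document; each statement's English description precedes it below -/
import Mathlib

section
/- Let N be a positive integer and a be an element of (ℤ/Nℤ)* with multiplicative order m := ord_N(a). Then ord_p(a) = m for every prime p dividing N if and only if gcd(N, a^(m/r) - 1) = 1 for every prime r dividing m. -/
/-!
Reduction modulo a prime `p ∣ N` makes `ord_p(a)` a divisor of `m = ord_N(a)`, and that divisor
equals `m` exactly when `a^(m/r) ≢ 1 (mod p)` for every prime `r ∣ m`. The gcd condition says
precisely that `a^(m/r) ≢ 1` modulo every prime `p ∣ N`.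
-/

namespace ZMod

theorem natCast_pow_eq_one_iff (a n k : ℕ) :
    (a : ZMod n) ^ k = 1 ↔ (n : ℤ) ∣ (a : ℤ) ^ k - 1 := by
  rw [← ZMod.intCast_zmod_eq_zero_iff_dvd]
  push_cast
  rw [sub_eq_zero]

theorem int_gcd_pow_sub_one_eq_one_iff (N a k : ℕ) :
    Int.gcd (N : ℤ) ((a : ℤ) ^ k - 1) = 1 ↔
      ∀ p : ℕ, p.Prime → p ∣ N → (a : ZMod p) ^ k ≠ 1 := by
  simp only [Ne, natCast_pow_eq_one_iff, Int.natCast_dvd, Int.gcd_eq_natAbs, Int.natAbs_natCast]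
  exact ⟨fun h p hp hpN hpb => hp.not_dvd_one (h ▸ Nat.dvd_gcd hpN hpb), Nat.coprime_of_dvd⟩

theorem orderOf_natCast_dvd_of_dvd {p N : ℕ} (a : ℕ) (h : p ∣ N) :
    orderOf (a : ZMod p) ∣ orderOf (a : ZMod N) := by
  simpa using orderOf_map_dvd (ZMod.castHom h (ZMod p)).toMonoidHom (a : ZMod N)

theorem orderOf_natCast_pos {a N : ℕ} (ha : a.Coprime N) : 0 < orderOf (a : ZMod N) := by
  rcases N.eq_zero_or_pos with rfl | hN
  · simp [(Nat.coprime_zero_right a).mp ha]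
  · have : NeZero N := ⟨hN.ne'⟩
    rw [← ZMod.coe_unitOfCoprime a ha, orderOf_units]
    exact orderOf_pos _

end ZMod

theorem order_all_primes_iff_general (N a : ℕ) (ha : Nat.Coprime a N)
    (m : ℕ) (hm : m = orderOf (a : ZMod N)) :
    (∀ p : ℕ, p.Prime → p ∣ N → orderOf (a : ZMod p) = m) ↔
      (∀ r : ℕ, r.Prime → r ∣ m → Int.gcd (N : ℤ) ((a : ℤ) ^ (m / r) - 1) = 1) := by
  have hm_pos : 0 < m := hm ▸ ZMod.orderOf_natCast_pos ha
  simp only [ZMod.int_gcd_pow_sub_one_eq_one_iff]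
  constructor
  · intro h r hr hrm p hp hpN
    exact pow_ne_one_of_lt_orderOf
      (Nat.div_ne_zero_iff_of_dvd hrm |>.mpr ⟨hm_pos.ne', hr.ne_zero⟩)
      ((h p hp hpN).symm ▸ Nat.div_lt_self hm_pos hr.one_lt)
  · intro h p hp hpN
    refine orderOf_eq_of_pow_and_pow_div_prime hm_pos ?_ fun r hr hrm => h r hr hrm p hp hpN
    exact orderOf_dvd_iff_pow_eq_one.mp (hm ▸ ZMod.orderOf_natCast_dvd_of_dvd a hpN)

/-- Hittmeir's order lemma: `ord_p(a) = ord_N(a)` for every prime `p ∣ N` iff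
`gcd(N, a^(m/r) - 1) = 1` for every prime `r ∣ m`. -/
theorem order_all_primes_iff (N a : ℕ) (hN : 0 < N) (ha : Nat.Coprime a N)
    (m : ℕ) (hm : m = orderOf (a : ZMod N)) :
    (∀ p : ℕ, p.Prime → p ∣ N → orderOf (a : ZMod p) = m) ↔
      (∀ r : ℕ, r.Prime → r ∣ m → Int.gcd (N : ℤ) ((a : ℤ) ^ (m / r) - 1) = 1) :=
  order_all_primes_iff_general N a ha m hm
end

section
/- Let N and ℓ be positive integers, and suppose N has a prime factor p with p > 2ℓ and ℓ > 25 sufficiently large. Let m = 10⌈√ℓ⌉ and let A = {a, a+1, …, a+m} be any set of m+1 consecutive positive integers. Then A contains an element b with b^ℓ ≢ 1 (mod N). -/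
open Polynomial Finset

/-- Pascal-type reindexing step for alternating binomial sums. -/
private lemma pascal_step {R : Type*} [CommRing R] (d : ℕ) (A : ℕ → R) :
    ∑ r ∈ Finset.range (d + 1 + 1), (-1 : R) ^ (d + 1 + r) * ((d + 1).choose r : R) * A r
      = ∑ r ∈ Finset.range (d + 1),
          (-1 : R) ^ (d + r) * (d.choose r : R) * (A (r + 1) - A r) := by
  have hsign : ∀ i : ℕ, (-1 : R) ^ (d + 1 + (i + 1)) = (-1 : R) ^ (d + i) := by
    intro i
    rw [show d + 1 + (i + 1) = (d + i) + 2 by omega, pow_add]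
    norm_num
  have hsign2 : ∀ i : ℕ, (-1 : R) ^ (d + (i + 1)) = -(-1 : R) ^ (d + i) := by
    intro i
    rw [show d + (i + 1) = (d + i) + 1 by omega, pow_succ]
    ring
  rw [Finset.sum_range_succ' (fun r => (-1 : R) ^ (d + 1 + r) * ((d + 1).choose r : R) * A r)
    (d + 1)]
  have hL : ∀ i ∈ Finset.range (d + 1),
      (-1 : R) ^ (d + 1 + (i + 1)) * (((d + 1).choose (i + 1) : ℕ) : R) * A (i + 1)
        = (-1 : R) ^ (d + i) * ((d.choose i : ℕ) : R) * A (i + 1)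
          + (-1 : R) ^ (d + i) * ((d.choose (i + 1) : ℕ) : R) * A (i + 1) := by
    intro i _
    rw [hsign, Nat.choose_succ_succ]
    push_cast
    ring
  rw [Finset.sum_congr rfl hL, Finset.sum_add_distrib]
  have hR : ∀ r ∈ Finset.range (d + 1),
      (-1 : R) ^ (d + r) * ((d.choose r : ℕ) : R) * (A (r + 1) - A r)
        = (-1 : R) ^ (d + r) * ((d.choose r : ℕ) : R) * A (r + 1)
          - (-1 : R) ^ (d + r) * ((d.choose r : ℕ) : R) * A r := by
    intro r _; ring
  rw [Finset.sum_congr rfl hR, Finset.sum_sub_distrib]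
  have key : (∑ i ∈ Finset.range (d + 1),
        (-1 : R) ^ (d + i) * ((d.choose (i + 1) : ℕ) : R) * A (i + 1))
      + (-1 : R) ^ (d + 1 + 0) * (((d + 1).choose 0 : ℕ) : R) * A 0
      = -∑ r ∈ Finset.range (d + 1), (-1 : R) ^ (d + r) * ((d.choose r : ℕ) : R) * A r := by
    rw [Finset.sum_range_succ' (fun r => (-1 : R) ^ (d + r) * ((d.choose r : ℕ) : R) * A r) d]
    rw [Finset.sum_range_succ]
    simp only [Nat.choose_succ_self, Nat.cast_zero, mul_zero, zero_mul, add_zero]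
    rw [neg_add]
    congr 1
    · rw [← Finset.sum_neg_distrib]
      refine Finset.sum_congr rfl ?_
      intro i _
      rw [hsign2]
      ring
    · rw [show d + 1 + 0 = d + (0 + 1) by omega, hsign2]
      simp
  linear_combination key

/-- Finite-difference evaluation: the `d`-th alternating binomial combination of
`(w + r)^e` vanishes for `e < d` and equals `d!` for `e = d`. -/
private lemma vlemma {R : Type*} [CommRing R] (d : ℕ) :
    ∀ e : ℕ, e ≤ d → ∀ w : R,
      (∑ r ∈ Finset.range (d + 1), (-1 : R) ^ (d + r) * (d.choose r : R) * (w + (r : R)) ^ e)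
        = if e = d then ((Nat.factorial d : ℕ) : R) else 0 := by
  induction d with
  | zero =>
    intro e he w
    obtain rfl : e = 0 := by omega
    simp [Nat.factorial]
  | succ d IH =>
    intro e he w
    rw [pascal_step d (fun r => (w + (r : R)) ^ e)]
    have hterm : ∀ r ∈ Finset.range (d + 1),
        (-1 : R) ^ (d + r) * (d.choose r : R) * ((w + ((r + 1 : ℕ) : R)) ^ e - (w + (r : R)) ^ e)
          = ∑ u ∈ Finset.range e,
              (e.choose u : R) * ((-1 : R) ^ (d + r) * (d.choose r : R) * (w + (r : R)) ^ u) := by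
      intro r _
      have hx : (w + ((r + 1 : ℕ) : R)) = (w + (r : R)) + 1 := by push_cast; ring
      rw [hx, add_pow, Finset.sum_range_succ]
      simp only [one_pow, Nat.choose_self, Nat.cast_one, mul_one, Nat.sub_self, pow_zero]
      rw [add_sub_cancel_right, Finset.mul_sum]
      refine Finset.sum_congr rfl ?_
      intro u _
      ring
    rw [Finset.sum_congr rfl hterm, Finset.sum_comm]
    have hinner : ∀ u ∈ Finset.range e,
        (∑ r ∈ Finset.range (d + 1),
            (e.choose u : R) * ((-1 : R) ^ (d + r) * (d.choose r : R) * (w + (r : R)) ^ u))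
          = (e.choose u : R) * (if u = d then ((Nat.factorial d : ℕ) : R) else 0) := by
      intro u hu
      have hud : u ≤ d := by
        have := Finset.mem_range.mp hu
        omega
      rw [← Finset.mul_sum, IH u hud w]
    rw [Finset.sum_congr rfl hinner]
    rcases eq_or_lt_of_le he with hed | hed
    · -- e = d + 1
      subst hed
      rw [Finset.sum_range_succ]
      have hzero : ∀ u ∈ Finset.range d,
          ((d + 1).choose u : R) * (if u = d then ((Nat.factorial d : ℕ) : R) else 0) = 0 := by
        intro u hu
        have : u < d := Finset.mem_range.mp hu
        rw [if_neg (by omega)]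
        ring
      rw [Finset.sum_eq_zero hzero, zero_add, if_pos rfl, if_pos rfl, Nat.choose_succ_self_right]
      push_cast [Nat.factorial_succ]
      ring
    · -- e ≤ d
      have hzero : ∀ u ∈ Finset.range e,
          (e.choose u : R) * (if u = d then ((Nat.factorial d : ℕ) : R) else 0) = 0 := by
        intro u hu
        have : u < e := Finset.mem_range.mp hu
        rw [if_neg (by omega)]
        ring
      rw [Finset.sum_eq_zero hzero, if_neg (by omega)]

/-- Among any `10⌈√ℓ⌉ + 1` consecutive integers there is one whose `ℓ`-th power is
not `1` modulo `N`, provided `N` has a prime factor `p > 2ℓ` and `ℓ` is large enough. -/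
theorem consecutive_nonroot (N ℓ : ℕ) (hN : 0 < N) (hℓpos : 0 < ℓ)
    (hp : ∃ p : ℕ, p.Prime ∧ p ∣ N ∧ p > 2 * ℓ)
    (hℓ : 25 < ℓ)
    (hlarge : 2 * (ℓ : ℝ) / (Real.sqrt ℓ / 2 - 1) + 3 < 5 * Real.sqrt ℓ)
    (a : ℕ) (ha : 0 < a) :
    ∃ j ≤ 10 * ⌈Real.sqrt ℓ⌉₊, (((a + j : ℕ) : ZMod N)) ^ ℓ ≠ 1 := by
  obtain ⟨p, hpp, hpN, hp2⟩ := hp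
  haveI : Fact p.Prime := ⟨hpp⟩
  haveI : NeZero p := ⟨hpp.ne_zero⟩
  by_contra hcon
  push_neg at hcon
  set k : ℕ := ⌈Real.sqrt ℓ⌉₊ with hkdef
  have hkl : k ≤ ℓ := by
    rw [hkdef]
    refine Nat.ceil_le.mpr ?_
    refine (Real.sqrt_le_left (by positivity)).mpr ?_
    have h1 : (1 : ℝ) ≤ (ℓ : ℝ) := by exact_mod_cast hℓpos
    nlinarith
  have hlk : ℓ ≤ k * k := by
    have h1 : Real.sqrt ℓ ≤ (k : ℝ) := Nat.le_ceil _
    have h2 : (ℓ : ℝ) ≤ (k : ℝ) * (k : ℝ) := by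
      nlinarith [Real.sq_sqrt (show (0 : ℝ) ≤ (ℓ : ℝ) by positivity),
        Real.sqrt_nonneg (ℓ : ℝ)]
    exact_mod_cast h2
  have hk1 : 1 ≤ k := by
    rcases Nat.eq_zero_or_pos k with h | h
    · rw [h] at hlk; omega
    · exact h
  set d : ℕ := k - 1 with hddef
  have hdk : d + 1 = k := by omega
  set M : ℕ := ℓ + d with hMdef
  have hMp : M < p := by omega
  -- all the considered integers are ℓ-th roots of unity modulo p
  have hroot : ∀ j : ℕ, j ≤ 10 * k → ((a : ZMod p) + (j : ZMod p)) ^ ℓ = 1 := by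
    intro j hj
    have h2 := congrArg (ZMod.castHom hpN (ZMod p)) (hcon j hj)
    simp only [map_pow, map_one, map_natCast] at h2
    push_cast at h2
    exact h2
  -- the auxiliary polynomial
  set G : Polynomial (ZMod p) :=
    (∑ r ∈ Finset.range (d + 1),
        Polynomial.C ((-1 : ZMod p) ^ (d + r) * (d.choose r : ZMod p))
          * (Polynomial.X + Polynomial.C (r : ZMod p)) ^ M)
      - Polynomial.C ((Nat.factorial d : ℕ) : ZMod p) with hGdef
  have hcoeff : ∀ m : ℕ, m ≤ M → G.coeff m
      = (M.choose m : ZMod p)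
          * (∑ r ∈ Finset.range (d + 1),
              (-1 : ZMod p) ^ (d + r) * (d.choose r : ZMod p) * ((r : ZMod p)) ^ (M - m))
        - (if m = 0 then ((Nat.factorial d : ℕ) : ZMod p) else 0) := by
    intro m hm
    rw [hGdef, Polynomial.coeff_sub, Polynomial.finset_sum_coeff, Polynomial.coeff_C]
    congr 1
    rw [Finset.mul_sum]
    refine Finset.sum_congr rfl ?_
    intro r _
    rw [Polynomial.coeff_C_mul, Polynomial.coeff_X_add_C_pow]
    ring
  have hdegM : G.natDegree ≤ M := by
    rw [hGdef]
    refine le_trans (Polynomial.natDegree_sub_le _ _) ?_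
    rw [max_le_iff]
    constructor
    · refine Polynomial.natDegree_sum_le_of_forall_le _ _ ?_
      intro r _
      refine le_trans (Polynomial.natDegree_C_mul_le _ _) ?_
      rw [(Polynomial.monic_X_add_C _).natDegree_pow, Polynomial.natDegree_X_add_C, mul_one]
    · simp
  have hdegl : G.natDegree ≤ ℓ := by
    refine Polynomial.natDegree_le_iff_coeff_eq_zero.mpr ?_
    intro m hm
    by_cases hmM : m ≤ M
    · rw [hcoeff m hmM]
      have hv := vlemma (R := ZMod p) d (M - m) (by omega) 0
      simp only [zero_add] at hv
      rw [hv, if_neg (by omega : ¬ M - m = d), if_neg (by omega : ¬ m = 0)]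
      ring
    · exact Polynomial.coeff_eq_zero_of_natDegree_lt (lt_of_le_of_lt hdegM (by omega))
  have hGl : G.coeff ℓ = (M.choose ℓ : ZMod p) * ((Nat.factorial d : ℕ) : ZMod p) := by
    rw [hcoeff ℓ (by omega)]
    have hv := vlemma (R := ZMod p) d (M - ℓ) (by omega) 0
    simp only [zero_add] at hv
    rw [hv, if_pos (by omega : M - ℓ = d), if_neg (by omega : ¬ ℓ = 0)]
    ring
  have hGne : G ≠ 0 := by
    intro h0
    have hz : G.coeff ℓ = 0 := by rw [h0]; simp
    rw [hGl, ← Nat.cast_mul, ZMod.natCast_eq_zero_iff] at hz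
    have hdvdM : (M.choose ℓ * Nat.factorial d) ∣ Nat.factorial M := by
      refine ⟨Nat.factorial ℓ, ?_⟩
      have hfac := Nat.choose_mul_factorial_mul_factorial (show ℓ ≤ M by omega)
      rw [show M - ℓ = d from by omega] at hfac
      calc Nat.factorial M = M.choose ℓ * Nat.factorial ℓ * Nat.factorial d := hfac.symm
        _ = M.choose ℓ * Nat.factorial d * Nat.factorial ℓ := by ring
    have hpM : p ∣ Nat.factorial M := hz.trans hdvdM
    have := (Nat.Prime.dvd_factorial hpp).mp hpM
    omega
  -- each point a + j, j ≤ k, is a root of multiplicity ≥ k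
  have hdvd : ∀ j ∈ Finset.range (k + 1),
      (Polynomial.X - Polynomial.C ((a : ZMod p) + (j : ZMod p))) ^ k ∣ G := by
    intro j hj
    have hjk : j ≤ k := by
      have := Finset.mem_range.mp hj
      omega
    set y : ZMod p := (a : ZMod p) + (j : ZMod p) with hydef
    set H : Polynomial (ZMod p) := G.comp (Polynomial.X + Polynomial.C y) with hHdef
    have hHeq : H = (∑ r ∈ Finset.range (d + 1),
        Polynomial.C ((-1 : ZMod p) ^ (d + r) * (d.choose r : ZMod p))
          * (Polynomial.X + Polynomial.C (y + (r : ZMod p))) ^ M)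
        - Polynomial.C ((Nat.factorial d : ℕ) : ZMod p) := by
      rw [hHdef, hGdef, Polynomial.sub_comp, Polynomial.sum_comp, Polynomial.C_comp]
      congr 1
      refine Finset.sum_congr rfl ?_
      intro r _
      rw [Polynomial.mul_comp, Polynomial.C_comp, Polynomial.pow_comp, Polynomial.add_comp,
        Polynomial.X_comp, Polynomial.C_comp, add_assoc, ← Polynomial.C_add]
    have hHcoeff : ∀ m, m < k → H.coeff m = 0 := by
      intro m hmk
      have hmd : m ≤ d := by omega
      have hmM : m ≤ M := by omega
      have hc : H.coeff m = (M.choose m : ZMod p)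
          * (∑ r ∈ Finset.range (d + 1),
              (-1 : ZMod p) ^ (d + r) * (d.choose r : ZMod p) * (y + (r : ZMod p)) ^ (M - m))
          - (if m = 0 then ((Nat.factorial d : ℕ) : ZMod p) else 0) := by
        rw [hHeq, Polynomial.coeff_sub, Polynomial.finset_sum_coeff, Polynomial.coeff_C]
        congr 1
        rw [Finset.mul_sum]
        refine Finset.sum_congr rfl ?_
        intro r _
        rw [Polynomial.coeff_C_mul, Polynomial.coeff_X_add_C_pow]
        ring
      rw [hc]
      have hred : ∀ r ∈ Finset.range (d + 1),
          (-1 : ZMod p) ^ (d + r) * (d.choose r : ZMod p) * (y + (r : ZMod p)) ^ (M - m)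
            = (-1 : ZMod p) ^ (d + r) * (d.choose r : ZMod p) * (y + (r : ZMod p)) ^ (d - m) := by
        intro r hr
        have hrd : r ≤ d := by
          have := Finset.mem_range.mp hr
          omega
        have hy1 : (y + (r : ZMod p)) ^ ℓ = 1 := by
          have h5 := hroot (j + r) (by omega)
          push_cast at h5
          rw [← add_assoc] at h5
          rw [hydef]
          exact h5
        rw [show M - m = ℓ + (d - m) from by omega, pow_add (y + (r : ZMod p)) ℓ (d - m), hy1, one_mul]
      rw [Finset.sum_congr rfl hred, vlemma (R := ZMod p) d (d - m) (by omega) y]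
      by_cases hm0 : m = 0
      · rw [if_pos (show d - m = d by omega), if_pos hm0]
        subst hm0
        simp
      · rw [if_neg (show ¬ d - m = d by omega), if_neg hm0]
        ring
    have hXk : (Polynomial.X : Polynomial (ZMod p)) ^ k ∣ H :=
      Polynomial.X_pow_dvd_iff.mpr hHcoeff
    obtain ⟨Q, hQ⟩ := hXk
    refine ⟨Q.comp (Polynomial.X - Polynomial.C y), ?_⟩
    have hGH : G = H.comp (Polynomial.X - Polynomial.C y) := by
      rw [hHdef, Polynomial.comp_assoc]
      simp [Polynomial.add_comp, Polynomial.X_comp, Polynomial.C_comp, sub_add_cancel]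
    rw [hGH, hQ, Polynomial.mul_comp, Polynomial.pow_comp, Polynomial.X_comp]
  -- the points are pairwise distinct
  have hinj : ∀ i ∈ Finset.range (k + 1), ∀ j ∈ Finset.range (k + 1), i ≠ j →
      ((a : ZMod p) + (i : ZMod p)) ≠ ((a : ZMod p) + (j : ZMod p)) := by
    intro i hi j hj hij hEq
    have h1 : (i : ZMod p) = (j : ZMod p) := add_left_cancel hEq
    rw [ZMod.natCast_eq_natCast_iff] at h1
    have hi' : i < p := by
      have := Finset.mem_range.mp hi
      omega
    have hj' : j < p := by
      have := Finset.mem_range.mp hj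
      omega
    have : i % p = j % p := h1
    rw [Nat.mod_eq_of_lt hi', Nat.mod_eq_of_lt hj'] at this
    exact hij this
  have hprod : (∏ j ∈ Finset.range (k + 1),
      (Polynomial.X - Polynomial.C ((a : ZMod p) + (j : ZMod p))) ^ k) ∣ G := by
    refine Finset.prod_dvd_of_coprime ?_ hdvd
    intro i hi j hj hij
    have hcop : IsCoprime (Polynomial.X - Polynomial.C ((a : ZMod p) + (i : ZMod p)))
        (Polynomial.X - Polynomial.C ((a : ZMod p) + (j : ZMod p))) := by
      refine Polynomial.isCoprime_X_sub_C_of_isUnit_sub ?_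
      have hne := hinj i hi j hj hij
      exact (sub_ne_zero.mpr hne).isUnit
    exact hcop.pow
  have hdeg2 : (k + 1) * k ≤ G.natDegree := by
    have h1 := Polynomial.natDegree_le_of_dvd hprod hGne
    rw [Polynomial.natDegree_prod] at h1
    · have h2 : ∀ j ∈ Finset.range (k + 1),
          ((Polynomial.X - Polynomial.C ((a : ZMod p) + (j : ZMod p))) ^ k).natDegree = k := by
        intro j _
        rw [(Polynomial.monic_X_sub_C _).natDegree_pow, Polynomial.natDegree_X_sub_C, mul_one]
      rw [Finset.sum_congr rfl h2, Finset.sum_const, Finset.card_range, smul_eq_mul] at h1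
      exact h1
    · intro j _
      exact pow_ne_zero _ (Polynomial.X_sub_C_ne_zero _)
  -- contradiction : (k+1)*k ≤ ℓ ≤ k*k
  have h9 : k * k + k ≤ k * k := by
    calc k * k + k = (k + 1) * k := by ring
      _ ≤ G.natDegree := hdeg2
      _ ≤ ℓ := hdegl
      _ ≤ k * k := hlk
  have hcontra : k * k < k * k :=
    lt_of_lt_of_le (Nat.lt_add_of_pos_right hk1) h9
  exact absurd hcontra (lt_irrefl _)
end

section
/- Let N, s be positive integers with gcd(N, s) = 1, and let s' ∈ [1, N−1] be the inverse of s modulo N. Let H < P be positive integers, and suppose p₀ = s·x₀ + 1 is a divisor of N lying in [P−H, P+H]. Let P̃ ∈ [0, s−1] be the residue of P modulo s, and define g(x) = x + c where c ≡ s' + s'(P − P̃) (mod N). Set x' = x₀ − (P − P̃)/s. Then x' is an integer, g(x') ≡ 0 (mod p₀), and |x'| ≤ H/s + 1. -/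
/-- The shifted monic polynomial `g(x) = x + c` has a small root `x'` modulo the
divisor `p₀ = s·x₀ + 1` of `N`. -/
theorem new_polynomial (N s : ℕ) (hN : 0 < N) (hs : 0 < s) (hcop : Nat.Coprime N s)
    (s' : ℕ) (hs'1 : 1 ≤ s') (hs'2 : s' ≤ N - 1) (hinv : s * s' ≡ 1 [MOD N])
    (H P : ℕ) (hHP : 0 < H) (hH : H < P)
    (x₀ : ℤ) (p₀ : ℤ) (hp₀ : p₀ = s * x₀ + 1) (hdvd : p₀ ∣ (N : ℤ))
    (hlo : (P : ℤ) - H ≤ p₀) (hhi : p₀ ≤ (P : ℤ) + H)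
    (P' : ℕ) (hP'lt : P' < s) (hP'mod : P' ≡ P [MOD s])
    (c : ℤ) (hc : c ≡ (s' : ℤ) + (s' : ℤ) * ((P : ℤ) - P') [ZMOD (N : ℤ)])
    (x' : ℤ) (hx' : x' = x₀ - ((P : ℤ) - P') / s) :
    (s : ℤ) ∣ ((P : ℤ) - P') ∧ p₀ ∣ (x' + c) ∧ (|x'| : ℝ) ≤ (H : ℝ) / s + 1 := by
  have hdiv : (s : ℤ) ∣ ((P : ℤ) - P') := by
    have := hP'mod.dvd
    exact_mod_cast this
  have hd : (s : ℤ) * (((P : ℤ) - P') / s) = (P : ℤ) - P' := Int.mul_ediv_cancel' hdiv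
  refine ⟨hdiv, ?_, ?_⟩
  · -- divisibility
    have hcopZ : IsCoprime (N : ℤ) (s : ℤ) := by
      rw [Int.isCoprime_iff_gcd_eq_one]
      exact_mod_cast hcop
    have hcp : IsCoprime p₀ (s : ℤ) := hcopZ.of_isCoprime_of_dvd_left hdvd
    have hcd : (N : ℤ) ∣ ((s' : ℤ) + (s' : ℤ) * ((P : ℤ) - P')) - c := hc.dvd
    have hid : (N : ℤ) ∣ 1 - (s : ℤ) * s' := by
      have := hinv.dvd
      push_cast at this
      exact this
    obtain ⟨a, ha⟩ := hcd
    obtain ⟨b, hb⟩ := hid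
    obtain ⟨m, hm⟩ := hdvd
    have key : (s : ℤ) * (x' + c) =
        p₀ * (1 - m * (b * (1 + ((P : ℤ) - P')) + a * s)) := by
      rw [hx', hp₀]
      rw [hp₀] at hm
      linear_combination -hd - (s:ℤ) * ha - (1 + ((P:ℤ) - P')) * hb -
        (b * (1 + ((P:ℤ) - P')) + a * s) * hm
    exact hcp.dvd_of_dvd_mul_left ⟨_, key⟩
  · -- size bound
    have hP'eq : P' = P % s := by rw [← Nat.mod_eq_of_lt hP'lt]; exact hP'mod
    have hP'le : (P' : ℤ) ≤ P := by exact_mod_cast (hP'eq ▸ Nat.mod_le P s)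
    have hP's : (P' : ℤ) < s := by exact_mod_cast hP'lt
    have h1 : (s : ℤ) * x' = p₀ - 1 - ((P : ℤ) - P') := by
      rw [hx', mul_sub, hd, hp₀]; ring
    have hs1 : (1 : ℤ) ≤ s := by exact_mod_cast hs
    have habs : |(s : ℤ) * x'| ≤ (H : ℤ) + s := by
      rw [abs_le]; constructor <;> linarith
    have hs0 : (0 : ℝ) < s := by exact_mod_cast hs
    have h3 : (s : ℝ) * |(x' : ℝ)| ≤ (H : ℝ) + s := by
      have h5 : |(s : ℝ) * (x' : ℝ)| ≤ (H : ℝ) + s := by exact_mod_cast habs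
      rwa [abs_mul, abs_of_nonneg hs0.le] at h5
    have h4 : |(x' : ℝ)| ≤ ((H : ℝ) + s) / s := by
      rw [le_div_iff₀ hs0, mul_comm]; exact h3
    calc (|x'| : ℝ) = |(x' : ℝ)| := by push_cast; ring
      _ ≤ ((H : ℝ) + s) / s := h4
      _ = (H : ℝ) / s + 1 := by field_simp
end

section
/- Let N, s, r, m, d be positive integers with gcd(N,s) = 1 and rm ≤ d. Let g(x) = x + c ∈ ℤ[x] be a monic linear polynomial, and suppose p₀ is an integer with p₀^r ∣ N, p₀ ≡ 1 (mod s), and x' is an integer with p₀ ∣ g(x'). Define f_i(x) = N^(m − ⌊i/r⌋)·g(x)^i for 0 ≤ i < rm, and f_i(x) = g(x)^i for rm ≤ i < d. Then p₀^(rm) divides f_i(x') for all 0 ≤ i < d. -/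
/-- `p₀^(rm)` divides each `f_i(x')` where `f_i(x) = N^(m-⌊i/r⌋) g(x)^i` for `i < rm`
and `f_i(x) = g(x)^i` for `rm ≤ i < d`, given `p₀^r ∣ N` and `p₀ ∣ g(x')`. -/
theorem fi_divisible (N s r m d : ℕ) (hN : 0 < N) (hs : 0 < s) (hr : 0 < r)
    (hm : 0 < m) (hd : 0 < d) (hcop : Nat.Coprime N s) (hrmd : r * m ≤ d)
    (c : ℤ) (p₀ : ℤ) (hp₀pos : 0 < p₀) (hpr : p₀ ^ r ∣ (N : ℤ))
    (hps : (s : ℤ) ∣ (p₀ - 1)) (x' : ℤ) (hroot : p₀ ∣ (x' + c)) :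
    ∀ i < d, p₀ ^ (r * m) ∣
      (if i < r * m then (N : ℤ) ^ (m - i / r) * (x' + c) ^ i else (x' + c) ^ i) := by
  intro i hi
  split_ifs with h
  · have h1 : p₀ ^ (r * (m - i / r)) ∣ (N : ℤ) ^ (m - i / r) := by
      rw [pow_mul]; exact pow_dvd_pow_of_dvd hpr _
    have h2 : p₀ ^ i ∣ (x' + c) ^ i := pow_dvd_pow_of_dvd hroot _
    have h3 : r * m ≤ r * (m - i / r) + i := by
      have := Nat.div_mul_le_self i r
      have hir : i / r ≤ m := Nat.le_of_lt (Nat.div_lt_of_lt_mul (by omega))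
      have : r * (i / r) ≤ i := by rw [mul_comm]; exact Nat.div_mul_le_self i r
      have : r * (m - i / r) = r * m - r * (i / r) := Nat.mul_sub r m (i/r)
      omega
    calc p₀ ^ (r * m) ∣ p₀ ^ (r * (m - i / r) + i) :=
          pow_dvd_pow _ h3
      _ = p₀ ^ (r * (m - i / r)) * p₀ ^ i := pow_add _ _ _
      _ ∣ (N : ℤ) ^ (m - i / r) * (x' + c) ^ i := mul_dvd_mul h1 h2
  · exact dvd_trans (pow_dvd_pow _ (by omega)) (pow_dvd_pow_of_dvd hroot i)
end

section
/- Let N, r, d, T be positive integers with d ≥ 2 and T ≤ N^(1/r). Define m = ⌊(d−1)·log T / log N⌋ and θ = r·log T / log N ∈ [0,1], and set G̃ = (1/(d^(1/(d−1))·2^(1/2))) · T^(2rm/(d−1)) / N^(rm(m+1)/(d(d−1))). Then G̃ > (1/3)·N^(θ²/r − 1/(d−1)). -/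
/-!
Write `T = N ^ (θ / r)`, so that `G̃` is, up to the constant `d ^ (1 / (d - 1)) * √2 < 3`,
a power of `N`. With `x = (d - 1) θ / r` and `m = ⌊x⌋`, the exponent inequality becomes
`x² - 2 m x + (d - 1) m (m + 1) / d ≤ (d - 1) / r`; its left side is at most
`(x - m)² + m ≤ x`, and `x ≤ (d - 1) / r` because `θ ≤ 1`.
-/

open Real

lemma sq_sub_two_mul_floor_mul_add_le {d x : ℝ} (hd : 0 < d) (hx : 0 ≤ x) :
    x ^ 2 - 2 * ⌊x⌋₊ * x + (d - 1) * ⌊x⌋₊ * (⌊x⌋₊ + 1) / d ≤ x := by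
  set m : ℝ := (⌊x⌋₊ : ℝ)
  have hm : 0 ≤ m := Nat.cast_nonneg _
  have hmx : m ≤ x := Nat.floor_le hx
  have hxm : x < m + 1 := Nat.lt_floor_add_one x
  have hfrac : (x - m) ^ 2 ≤ x - m := by nlinarith
  have hcoef : (d - 1) * m * (m + 1) / d ≤ m * (m + 1) := by
    rw [div_le_iff₀ hd]
    nlinarith
  nlinarith

lemma sq_div_sub_one_div_le_floor_exponent {d r θ : ℝ} (hd : 1 < d) (hr : 0 < r)
    (hθ0 : 0 ≤ θ) (hθ1 : θ ≤ 1) :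
    θ ^ 2 / r - 1 / (d - 1) ≤
      2 * θ * ⌊(d - 1) * θ / r⌋₊ / (d - 1) -
        r * ⌊(d - 1) * θ / r⌋₊ * (⌊(d - 1) * θ / r⌋₊ + 1) / (d * (d - 1)) := by
  have hd1 : 0 < d - 1 := sub_pos.2 hd
  set x := (d - 1) * θ / r with hx
  set m : ℝ := (⌊x⌋₊ : ℝ)
  have hθx : θ = r * x / (d - 1) := by rw [hx]; field_simp
  have hxr : x ≤ (d - 1) / r := by
    rw [hx]; gcongr; exact mul_le_of_le_one_right hd1.le hθ1
  have hkey : x ^ 2 - 2 * m * x + (d - 1) * m * (m + 1) / d ≤ (d - 1) / r :=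
    (sq_sub_two_mul_floor_mul_add_le (by linarith) (by positivity)).trans hxr
  have hdiff : 2 * θ * m / (d - 1) - r * m * (m + 1) / (d * (d - 1)) - (θ ^ 2 / r - 1 / (d - 1))
      = r / (d - 1) ^ 2 * ((d - 1) / r - (x ^ 2 - 2 * m * x + (d - 1) * m * (m + 1) / d)) := by
    rw [hθx]
    field_simp
    ring
  rw [← sub_nonneg, hdiff]
  exact mul_nonneg (by positivity) (sub_nonneg.2 hkey)

lemma rpow_one_div_sub_one_le_two {d : ℝ} (hd : 2 ≤ d) : d ^ (1 / (d - 1)) ≤ 2 := by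
  have hd1 : 0 < d - 1 := by linarith
  have hpow : d ≤ 2 ^ (d - 1) := by
    have := one_add_mul_self_le_rpow_one_add (s := 1) (by norm_num) (p := d - 1) (by linarith)
    norm_num at this
    linarith
  calc d ^ (1 / (d - 1)) ≤ (2 ^ (d - 1)) ^ (1 / (d - 1)) := by gcongr
    _ = 2 := by rw [← rpow_mul (by norm_num), mul_one_div_cancel hd1.ne', rpow_one]

lemma one_third_lt_inv_rpow_mul_sqrt_two {d : ℝ} (hd : 2 ≤ d) :
    1 / 3 < 1 / (d ^ (1 / (d - 1)) * √2) := by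
  have hsqrt : √2 < 3 / 2 := by
    rw [sqrt_lt' (by norm_num)]; norm_num
  have hpos : 0 < d ^ (1 / (d - 1)) * √2 := by positivity
  rw [div_lt_div_iff₀ (by norm_num) hpos]
  nlinarith [rpow_one_div_sub_one_le_two hd, sqrt_nonneg 2]

lemma rpow_log_div_log {a b : ℝ} (ha : 0 < a) (hb : 0 < b) (hab : b = 1 → a = 1) :
    b ^ (log a / log b) = a := by
  rcases eq_or_ne b 1 with rfl | hb1
  · rw [one_rpow, hab rfl]
  · exact rpow_logb hb hb1 ha

/-- Harvey–Hittmeir Lemma 3.1: lower bound on the admissible half-interval width `G̃`. -/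
theorem Gtilde_lower_bound (N r d T : ℕ) (hN : 0 < N) (hr : 0 < r) (hT : 0 < T)
    (hd : 2 ≤ d) (hTN : (T : ℝ) ≤ (N : ℝ) ^ ((1 : ℝ) / r))
    (m : ℕ) (hm : m = ⌊((d : ℝ) - 1) * Real.log T / Real.log N⌋₊)
    (θ : ℝ) (hθ : θ = (r : ℝ) * Real.log T / Real.log N)
    (G : ℝ)
    (hG : G = 1 / ((d : ℝ) ^ ((1 : ℝ) / ((d : ℝ) - 1)) * Real.sqrt 2) *
        ((T : ℝ) ^ ((2 * (r : ℝ) * m) / ((d : ℝ) - 1)) /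
          (N : ℝ) ^ (((r : ℝ) * m * (m + 1)) / ((d : ℝ) * ((d : ℝ) - 1)))) ) :
    G > 1 / 3 * (N : ℝ) ^ (θ ^ 2 / r - 1 / ((d : ℝ) - 1)) := by
  have hdR : (2 : ℝ) ≤ d := by exact_mod_cast hd
  have hrR : (0 : ℝ) < r := by exact_mod_cast hr
  have hN1 : (1 : ℝ) ≤ N := by exact_mod_cast hN
  have hθ0 : 0 ≤ θ := hθ ▸ by positivity
  have hθ1 : θ ≤ 1 := by
    have := log_le_log (by positivity) hTN
    rw [log_rpow (by positivity)] at this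
    rw [hθ]
    exact div_le_one_of_le₀ (by field_simp at this; linarith) (log_natCast_nonneg N)
  have hTθ : (T : ℝ) = N ^ (θ / r) := by
    have hθr : θ / r = log T / log N := by rw [hθ]; field_simp
    rw [hθr, rpow_log_div_log (Nat.cast_pos.2 hT) (Nat.cast_pos.2 hN)]
    intro hN_one
    have : (T : ℝ) ≤ 1 := by simpa [hN_one] using hTN
    exact_mod_cast le_antisymm (by exact_mod_cast this) hT
  have hmθ : m = ⌊((d : ℝ) - 1) * θ / r⌋₊ := by
    rw [hm, hθ]; congr 1; field_simp
  have hexp : θ / r * (2 * r * m / (d - 1)) = 2 * θ * m / (d - 1) := by field_simp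
  have hGN : G = 1 / ((d : ℝ) ^ ((1 : ℝ) / (d - 1)) * √2) *
      (N : ℝ) ^ (2 * θ * m / (d - 1) - r * m * (m + 1) / (d * (d - 1))) := by
    rw [hG, hTθ, ← rpow_mul (by positivity), hexp, rpow_sub (by positivity)]
  rw [hGN, hmθ]
  calc 1 / 3 * (N : ℝ) ^ (θ ^ 2 / r - 1 / ((d : ℝ) - 1))
      < 1 / ((d : ℝ) ^ ((1 : ℝ) / (d - 1)) * √2) * (N : ℝ) ^ (θ ^ 2 / r - 1 / ((d : ℝ) - 1)) :=
        mul_lt_mul_of_pos_right (one_third_lt_inv_rpow_mul_sqrt_two hdR) (by positivity)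
    _ ≤ _ := mul_le_mul_of_nonneg_left (rpow_le_rpow_of_exponent_le hN1
        (sq_div_sub_one_div_le_floor_exponent (by linarith) hrR hθ0 hθ1)) (by positivity)
end
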